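/- Composition of copyless monotone register updates is well-defined: if σ ∈ CMR(k, ℓ) and σ′ ∈ CMR(n, k), then the tuple obtained from σ by substituting each register index i < k by the i-th component of σ′ lies in CMR(n, ℓ), i.e. is again copyless and monotone. Moreover this composition is associative with the identity update (0, 1, …, n−1) as unit. -/

import Mathlib

/-!
STATEMENT 17: Composition of copyless monotone register updates (by substituting register
indices) is well-defined (copyless and monotone again), associative, and has the identity
update `(0, 1, …, n−1)` as unit.
-/

/-- An update from `n` registers to `k` registers: a `k`-tuple of words over `Γ ⊕ Fin n`. -/
abbrev Update (Γ : Type) (n k : ℕ) := Fin k → List (Γ ⊕ Fin n)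

/-- Copylessness: every register index occurs at most once in the whole tuple. -/
def Copyless {Γ : Type} [DecidableEq Γ] {n k : ℕ} (w : Update Γ n k) : Prop :=
  ∀ i : Fin n, (∑ ℓ : Fin k, (w ℓ).count (Sum.inr i)) ≤ 1

/-- Monotonicity: if `i ≤ j` occur in components `ℓi`, `ℓj` respectively, then either
`ℓi < ℓj`, or `ℓi = ℓj` and the occurrence of `i` precedes that of `j`. -/
def MonotoneUpd {Γ : Type} [DecidableEq Γ] {n k : ℕ} (w : Update Γ n k) : Prop :=
  ∀ i j : Fin n, i ≤ j → ∀ ℓi ℓj : Fin k,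
    Sum.inr i ∈ w ℓi → Sum.inr j ∈ w ℓj →
      (ℓi < ℓj ∨ (ℓi = ℓj ∧ (w ℓi).idxOf (Sum.inr i) ≤ (w ℓj).idxOf (Sum.inr j)))

/-- Copyless monotone register updates. -/
def IsCMR {Γ : Type} [DecidableEq Γ] {n k : ℕ} (w : Update Γ n k) : Prop :=
  Copyless w ∧ MonotoneUpd w

/-- Composition: substitute each register index `i` occurring in `σ` by the `i`-th
component of `σ'`. -/
def compU {Γ : Type} {n k l : ℕ} (σ : Update Γ k l) (σ' : Update Γ n k) : Update Γ n l :=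
  fun j => (σ j).flatMap (fun x => match x with
    | Sum.inl a => [Sum.inl a]
    | Sum.inr i => σ' i)

/-- The identity update `(0, 1, …, n−1)`. -/
def idU (Γ : Type) (n : ℕ) : Update Γ n n := fun i => [Sum.inr i]

/-
Substituting `σ'` into `σ` multiplies occurrence counts: register `i` occurs in the composite
`∑ p, #(p in σ) * #(i in σ' p)` times, so copylessness survives. For monotonicity, occurrences
`i ≤ j` of the composite come from registers `p` and `q` of `σ` with `i ∈ σ' p`, `j ∈ σ' q`, and
monotonicity of `σ'` gives `p < q` or `p = q`. If `p < q`, monotonicity of `σ` places the block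
`σ' p` before `σ' q`; if `p = q`, copylessness of `σ` means there is only one block `σ' p`, inside
which `σ'` already orders `i` before `j`. Associativity and the unit laws are those of `flatMap`.
-/

-- Core derives `BEq` for sums (used by `count` and `idxOf` above) without a `LawfulBEq` instance.
instance Sum.instLawfulBEq {α β : Type*} [BEq α] [BEq β] [LawfulBEq α] [LawfulBEq β] :
    LawfulBEq (α ⊕ β) where
  rfl {a} := by
    cases a with
    | inl x => show (x == x) = true; exact BEq.rfl
    | inr x => show (x == x) = true; exact BEq.rfl
  eq_of_beq {a b} h := by
    cases a <;> cases b <;> first | cases h | exact congrArg _ (eq_of_beq h)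

namespace List

variable {α β : Type*} [BEq β] [LawfulBEq β]

theorem notMem_of_count_append_le_one {l₁ l₂ : List β} {a : β}
    (h : (l₁ ++ l₂).count a ≤ 1) (ha : a ∈ l₂) : a ∉ l₁ := by
  intro ha₁
  have h₁ := count_pos_iff.2 ha₁
  have h₂ := count_pos_iff.2 ha
  rw [count_append] at h
  omega

theorem idxOf_append_lt_idxOf_append {l₁ l₂ : List β} {b c : β} (hb : b ∈ l₁) (hc : c ∉ l₁) :
    (l₁ ++ l₂).idxOf b < (l₁ ++ l₂).idxOf c := by
  rw [idxOf_append_of_mem hb, idxOf_append_of_notMem hc]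
  exact Nat.lt_add_right _ (idxOf_lt_length_iff.2 hb)

theorem exists_append_of_idxOf_lt [BEq α] [LawfulBEq α] {l : List α} {x y : α} (hy : y ∈ l)
    (h : l.idxOf x < l.idxOf y) : ∃ s t, l = s ++ t ∧ x ∈ s ∧ y ∈ t := by
  have hyl := idxOf_lt_length_iff.2 hy
  refine ⟨l.take (l.idxOf y), l.drop (l.idxOf y), (take_append_drop _ _).symm,
    (mem_take_iff_idxOf_lt ?_).2 h, ?_⟩
  · exact idxOf_lt_length_iff.1 (h.trans hyl)
  · rw [drop_eq_getElem_cons hyl, getElem_idxOf hyl]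
    exact mem_cons_self

theorem idxOf_flatMap_lt_of_mem_left_of_mem_right {s t : List α} {g : α → List β} {x y : α}
    {b c : β} (hc : ((s ++ t).flatMap g).count c ≤ 1) (hx : x ∈ s) (hy : y ∈ t)
    (hbx : b ∈ g x) (hcy : c ∈ g y) :
    ((s ++ t).flatMap g).idxOf b < ((s ++ t).flatMap g).idxOf c := by
  rw [flatMap_append] at hc ⊢
  exact idxOf_append_lt_idxOf_append (mem_flatMap.2 ⟨x, hx, hbx⟩)
    (notMem_of_count_append_le_one hc (mem_flatMap.2 ⟨y, hy, hcy⟩))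

theorem idxOf_flatMap_append_cons {s t : List α} {g : α → List β} {x : α} {b : β}
    (hb : b ∉ s.flatMap g) (hbx : b ∈ g x) :
    ((s ++ x :: t).flatMap g).idxOf b = (s.flatMap g).length + (g x).idxOf b := by
  rw [flatMap_append, flatMap_cons, idxOf_append_of_notMem hb, idxOf_append_of_mem hbx]

theorem idxOf_flatMap_le_idxOf_flatMap {l : List α} {g : α → List β} {x : α} {b c : β}
    (hb : (l.flatMap g).count b ≤ 1) (hc : (l.flatMap g).count c ≤ 1) (hx : x ∈ l)
    (hbx : b ∈ g x) (hcx : c ∈ g x) (h : (g x).idxOf b ≤ (g x).idxOf c) :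
    (l.flatMap g).idxOf b ≤ (l.flatMap g).idxOf c := by
  obtain ⟨s, t, rfl⟩ := append_of_mem hx
  have hmem {a : β} (ha : a ∈ g x) : a ∈ (x :: t).flatMap g := by
    rw [flatMap_cons]; exact mem_append_left _ ha
  rw [flatMap_append] at hb hc
  rw [idxOf_flatMap_append_cons (notMem_of_count_append_le_one hb (hmem hbx)) hbx,
    idxOf_flatMap_append_cons (notMem_of_count_append_le_one hc (hmem hcx)) hcx]
  exact Nat.add_le_add_left h _

end List

section Update

variable {Γ : Type} {n k l m : ℕ}

def substitution (σ' : Update Γ n k) : Γ ⊕ Fin k → List (Γ ⊕ Fin n) :=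
  Sum.elim (fun a => [Sum.inl a]) σ'

theorem compU_apply (σ : Update Γ k l) (σ' : Update Γ n k) (j : Fin l) :
    compU σ σ' j = (σ j).flatMap (substitution σ') := by
  simp only [compU, substitution]
  congr 1
  funext x
  cases x <;> rfl

theorem mem_compU {σ : Update Γ k l} {σ' : Update Γ n k} {j : Fin l} {i : Fin n} :
    Sum.inr i ∈ compU σ σ' j ↔ ∃ p, Sum.inr p ∈ σ j ∧ Sum.inr i ∈ σ' p := by
  simp [compU_apply, substitution, List.mem_flatMap, Sum.exists]

theorem compU_assoc (τ : Update Γ m l) (τ' : Update Γ k m) (τ'' : Update Γ n k) :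
    compU (compU τ τ') τ'' = compU τ (compU τ' τ'') := by
  funext j
  simp only [compU_apply, List.flatMap_assoc]
  congr 1
  funext x
  cases x <;> simp [substitution, compU_apply]

theorem compU_idU (σ : Update Γ k l) : compU σ (idU Γ k) = σ := by
  have hsubst : substitution (idU Γ k) = fun x => [x] := funext fun x => by cases x <;> rfl
  funext j
  rw [compU_apply, hsubst, List.flatMap_singleton']

theorem idU_compU (σ : Update Γ k l) : compU (idU Γ l) σ = σ := by
  funext j
  rw [compU_apply]
  exact List.flatMap_singleton _ _

variable [DecidableEq Γ]

theorem count_compU (σ : Update Γ k l) (σ' : Update Γ n k) (j : Fin l) (i : Fin n) :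
    (compU σ σ' j).count (Sum.inr i)
      = ∑ p, (σ j).count (Sum.inr p) * (σ' p).count (Sum.inr i) := by
  rw [compU_apply]
  induction σ j with
  | nil => simp
  | cons x t ih =>
    rw [List.flatMap_cons, List.count_append, ih]
    cases x with
    | inl a => simp [substitution]
    | inr q => simp [substitution, List.count_cons, add_mul, Finset.sum_add_distrib, add_comm]

theorem Copyless.count_le_one {w : Update Γ n k} (hw : Copyless w) (ℓ : Fin k) (i : Fin n) :
    (w ℓ).count (Sum.inr i) ≤ 1 :=
  (Finset.single_le_sum (fun _ _ => Nat.zero_le _) (Finset.mem_univ ℓ)).trans (hw i)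

theorem Copyless.eq_of_mem {w : Update Γ n k} (hw : Copyless w) {i : Fin n} {ℓ ℓ' : Fin k}
    (h : Sum.inr i ∈ w ℓ) (h' : Sum.inr i ∈ w ℓ') : ℓ = ℓ' := by
  by_contra hne
  have hpair := Finset.sum_le_sum_of_subset (f := fun ℓ => (w ℓ).count (Sum.inr i))
    (Finset.subset_univ {ℓ, ℓ'})
  rw [Finset.sum_pair hne] at hpair
  have := List.count_pos_iff.2 h
  have := List.count_pos_iff.2 h'
  have := hw i
  omega

theorem Copyless.comp {σ : Update Γ k l} {σ' : Update Γ n k} (hσ : Copyless σ)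
    (hσ' : Copyless σ') : Copyless (compU σ σ') := by
  intro i
  calc ∑ ℓ, (compU σ σ' ℓ).count (Sum.inr i)
      = ∑ p, (∑ ℓ, (σ ℓ).count (Sum.inr p)) * (σ' p).count (Sum.inr i) := by
        simp only [count_compU, Finset.sum_mul]
        exact Finset.sum_comm
    _ ≤ ∑ p, (σ' p).count (Sum.inr i) :=
        Finset.sum_le_sum fun p _ => (Nat.mul_le_mul_right _ (hσ p)).trans_eq (one_mul _)
    _ ≤ 1 := hσ' i

theorem MonotoneUpd.comp {σ : Update Γ k l} {σ' : Update Γ n k} (hσc : Copyless σ)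
    (hσm : MonotoneUpd σ) (hσ'c : Copyless σ') (hσ'm : MonotoneUpd σ') :
    MonotoneUpd (compU σ σ') := by
  have hcount := (hσc.comp hσ'c).count_le_one
  intro i j hij ℓi ℓj hi hj
  obtain ⟨p, hp, hip⟩ := mem_compU.1 hi
  obtain ⟨q, hq, hjq⟩ := mem_compU.1 hj
  rcases hσ'm i j hij p q hip hjq with hpq | ⟨rfl, hidx⟩
  · rcases hσm p q hpq.le ℓi ℓj hp hq with hℓ | ⟨rfl, hle⟩
    · exact Or.inl hℓ
    · have hne : (σ ℓi).idxOf (Sum.inr p) ≠ (σ ℓi).idxOf (Sum.inr q) := fun h =>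
        hpq.ne (Sum.inr_injective ((List.idxOf_inj hp).1 h))
      obtain ⟨s, t, hst, hps, hqt⟩ := List.exists_append_of_idxOf_lt hq (lt_of_le_of_ne hle hne)
      have hj' := hcount ℓi j
      rw [compU_apply, hst] at hj' ⊢
      exact Or.inr ⟨rfl, (List.idxOf_flatMap_lt_of_mem_left_of_mem_right hj' hps hqt hip hjq).le⟩
  · obtain rfl := hσc.eq_of_mem hp hq
    have hi' := hcount ℓi i
    have hj' := hcount ℓi j
    rw [compU_apply] at hi' hj' ⊢
    exact Or.inr ⟨rfl, List.idxOf_flatMap_le_idxOf_flatMap hi' hj' hp hip hjq hidx⟩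

theorem IsCMR.comp {σ : Update Γ k l} {σ' : Update Γ n k} (hσ : IsCMR σ) (hσ' : IsCMR σ') :
    IsCMR (compU σ σ') :=
  ⟨hσ.1.comp hσ'.1, hσ.2.comp hσ.1 hσ'.1 hσ'.2⟩

end Update

theorem cmr_comp_wellDefined_assoc_unit {Γ : Type} [DecidableEq Γ]
    {n k l m : ℕ}
    (σ : Update Γ k l) (σ' : Update Γ n k)
    (hσ : IsCMR σ) (hσ' : IsCMR σ') :
    IsCMR (compU σ σ') ∧
    (∀ (τ : Update Γ m l) (τ' : Update Γ k m) (τ'' : Update Γ n k),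
        compU (compU τ τ') τ'' = compU τ (compU τ' τ'')) ∧
    compU σ (idU Γ k) = σ ∧
    compU (idU Γ l) σ = σ :=
  ⟨hσ.comp hσ', compU_assoc, compU_idU σ, idU_compU σ⟩
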